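/- The function w ↦ Li₂(−e^w) is holomorphic on the horizontal strip {w ∈ ℂ : |Im w| < π}, and its derivative there equals −Log(1 + e^w). -/

import Mathlib

/-!
Differentiating under the integral sign, `Li₂' z = ∫₀¹ (1 - z t)⁻¹ dt` whenever `1 - z` lies
in the slit plane: the integrand `Log (1 - z t) / t` is integrable since `Log (1 - z t) = O(t)`
by the mean value theorem, and its `z`-derivative `-(1 - z t)⁻¹` is bounded uniformly near `z`
by compactness. For `|Im w| < π` the point `1 + e^w` is in the slit plane, and the chain rule
gives the derivative `-e^w ∫₀¹ (1 + e^w t)⁻¹ dt = -Log (1 + e^w)` of `w ↦ Li₂ (-e^w)`.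
-/

open Real

/-- The dilogarithm `Li₂(z) = -∫₀¹ Log(1 - z t) / t dt`. -/
noncomputable def Li2 (z : ℂ) : ℂ :=
  -∫ t in (0:ℝ)..(1:ℝ), Complex.log (1 - z * (t : ℂ)) / (t : ℂ)

open Complex MeasureTheory Set Topology

namespace Complex

lemma one_add_mem_slitPlane {z : ℂ} (hz : z ∈ slitPlane) : 1 + z ∈ slitPlane := by
  rw [mem_slitPlane_iff] at hz ⊢
  simp only [add_re, one_re, add_im, one_im, zero_add]
  exact hz.imp (fun h => by linarith) id

lemma exp_mem_slitPlane_of_abs_im_lt {w : ℂ} (hw : |w.im| < π) : exp w ∈ slitPlane := by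
  obtain ⟨hlo, hhi⟩ := abs_lt.mp hw
  rw [exp_mem_slitPlane, (toIocMod_eq_self _).mpr ⟨hlo, by linarith⟩]
  exact hhi.ne

lemma one_sub_mul_ofReal_mem_slitPlane {z : ℂ} (hz : 1 - z ∈ slitPlane) {t : ℝ}
    (ht : t ∈ Icc (0 : ℝ) 1) : 1 - z * t ∈ slitPlane := by
  have := starConvex_one_slitPlane.add_smul_mem (y := -z) (by rwa [← sub_eq_add_neg]) ht.1 ht.2
  rwa [smul_neg, real_smul, ← sub_eq_add_neg, mul_comm] at this

lemma exists_norm_inv_one_sub_mul_ofReal_le {K : Set ℂ} (hK : IsCompact K)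
    (hKU : ∀ x ∈ K, 1 - x ∈ slitPlane) :
    ∃ C, ∀ x ∈ K, ∀ t ∈ Icc (0 : ℝ) 1, ‖(1 - x * t)⁻¹‖ ≤ C := by
  obtain ⟨C, hC⟩ := (hK.prod isCompact_Icc).exists_bound_of_continuousOn
    (f := fun p : ℂ × ℝ => (1 - p.1 * p.2)⁻¹) <| by
      refine ContinuousOn.inv₀ (by fun_prop) fun p hp => ?_
      exact slitPlane_ne_zero (one_sub_mul_ofReal_mem_slitPlane (hKU p.1 hp.1) hp.2)
  exact ⟨C, fun x hx t ht => hC (x, t) ⟨hx, ht⟩⟩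

lemma hasDerivAt_log_one_sub_mul_ofReal {z : ℂ} {t : ℝ} (ht : 1 - z * t ∈ slitPlane) :
    HasDerivAt (fun s : ℝ => log (1 - z * s)) (-z * (1 - z * t)⁻¹) t := by
  have := ((hasDerivAt_log ht).comp (t : ℂ)
    (((hasDerivAt_id (t : ℂ)).const_mul z).const_sub 1)).comp_ofReal
  exact this.congr_deriv (by ring)

lemma hasDerivAt_log_one_sub_mul_ofReal_div {x : ℂ} {t : ℝ} (ht : t ≠ 0)
    (hx : 1 - x * t ∈ slitPlane) :
    HasDerivAt (fun x : ℂ => log (1 - x * t) / t) (-(1 - x * t)⁻¹) x := by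
  have := ((hasDerivAt_log hx).comp x
    (((hasDerivAt_id x).mul_const (t : ℂ)).const_sub 1)).div_const (t : ℂ)
  refine this.congr_deriv ?_
  rw [one_mul, mul_neg, neg_div, mul_div_cancel_right₀ _ (ofReal_ne_zero.mpr ht)]

lemma exists_norm_log_one_sub_mul_ofReal_le {z : ℂ} (hz : 1 - z ∈ slitPlane) :
    ∃ C, ∀ t ∈ Icc (0 : ℝ) 1, ‖log (1 - z * t)‖ ≤ C * t := by
  obtain ⟨C, hC⟩ := exists_norm_inv_one_sub_mul_ofReal_le isCompact_singleton
    (by simpa using hz)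
  refine ⟨‖z‖ * C, fun t ht => ?_⟩
  have := (convex_Icc (0 : ℝ) 1).norm_image_sub_le_of_norm_hasDerivWithin_le
    (fun s hs => (hasDerivAt_log_one_sub_mul_ofReal
      (one_sub_mul_ofReal_mem_slitPlane hz hs)).hasDerivWithinAt)
    (fun s hs => by
      rw [norm_mul, norm_neg]
      exact mul_le_mul_of_nonneg_left (hC z rfl s hs) (norm_nonneg z))
    (left_mem_Icc.mpr zero_le_one) ht
  simpa [abs_of_nonneg ht.1] using this

lemma intervalIntegrable_log_one_sub_mul_ofReal_div {z : ℂ} (hz : 1 - z ∈ slitPlane) :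
    IntervalIntegrable (fun t : ℝ => log (1 - z * t) / t) volume 0 1 := by
  obtain ⟨C, hC⟩ := exists_norm_log_one_sub_mul_ofReal_le hz
  rw [intervalIntegrable_iff_integrableOn_Ioc_of_le zero_le_one]
  refine (integrable_const C).mono' ?_ ?_
  · refine ContinuousOn.aestronglyMeasurable ?_ measurableSet_Ioc
    refine ContinuousOn.div (ContinuousOn.clog (by fun_prop) fun t ht => ?_) (by fun_prop)
      fun t ht => ofReal_ne_zero.mpr ht.1.ne'
    exact one_sub_mul_ofReal_mem_slitPlane hz (Ioc_subset_Icc_self ht)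
  · refine (ae_restrict_iff' measurableSet_Ioc).mpr (.of_forall fun t ht => ?_)
    rw [norm_div, norm_real, Real.norm_of_nonneg ht.1.le, div_le_iff₀ ht.1]
    exact hC t (Ioc_subset_Icc_self ht)

end Complex

theorem hasDerivAt_Li2 {z : ℂ} (hz : 1 - z ∈ slitPlane) :
    HasDerivAt Li2 (∫ t in (0 : ℝ)..1, (1 - z * t)⁻¹) z := by
  have hU : IsOpen {x : ℂ | 1 - x ∈ slitPlane} :=
    isOpen_slitPlane.preimage (continuous_const.sub continuous_id)
  obtain ⟨ε, hε, hball⟩ := Metric.nhds_basis_closedBall.mem_iff.mp (hU.mem_nhds hz)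
  obtain ⟨C, hC⟩ := exists_norm_inv_one_sub_mul_ofReal_le (isCompact_closedBall z ε) hball
  have hIoc : uIoc (0 : ℝ) 1 = Ioc 0 1 := uIoc_of_le zero_le_one
  have hF_meas : ∀ᶠ x in 𝓝 z, AEStronglyMeasurable
      (fun t : ℝ => Complex.log (1 - x * t) / t) (volume.restrict (uIoc 0 1)) := by
    filter_upwards [hU.mem_nhds hz] with x hx
    exact (intervalIntegrable_log_one_sub_mul_ofReal_div hx).def'.aestronglyMeasurable
  have hF'_meas : AEStronglyMeasurable (fun t : ℝ => -(1 - z * t)⁻¹)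
      (volume.restrict (uIoc 0 1)) := by
    refine (ContinuousOn.intervalIntegrable ?_).def'.aestronglyMeasurable
    rw [uIcc_of_le zero_le_one]
    exact (ContinuousOn.inv₀ (by fun_prop) fun t ht =>
      slitPlane_ne_zero (one_sub_mul_ofReal_mem_slitPlane hz ht)).neg
  have h_bound : ∀ᵐ t : ℝ, t ∈ uIoc 0 1 → ∀ x ∈ Metric.ball z ε,
      ‖-(1 - x * t)⁻¹‖ ≤ C := by
    refine .of_forall fun t ht x hx => ?_
    rw [hIoc] at ht
    rw [norm_neg]
    exact hC x (Metric.ball_subset_closedBall hx) t (Ioc_subset_Icc_self ht)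
  have h_diff : ∀ᵐ t : ℝ, t ∈ uIoc 0 1 → ∀ x ∈ Metric.ball z ε,
      HasDerivAt (fun x : ℂ => Complex.log (1 - x * t) / t) (-(1 - x * t)⁻¹) x := by
    refine .of_forall fun t ht x hx => ?_
    rw [hIoc] at ht
    exact hasDerivAt_log_one_sub_mul_ofReal_div ht.1.ne' (one_sub_mul_ofReal_mem_slitPlane
      (hball (Metric.ball_subset_closedBall hx)) (Ioc_subset_Icc_self ht))
  obtain ⟨-, hder⟩ := intervalIntegral.hasDerivAt_integral_of_dominated_loc_of_deriv_le
    (Metric.ball_mem_nhds z hε) hF_meas (intervalIntegrable_log_one_sub_mul_ofReal_div hz)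
    hF'_meas h_bound intervalIntegrable_const h_diff
  have := hder.neg
  rw [intervalIntegral.integral_neg, neg_neg] at this
  exact this

/-- The function `w ↦ Li₂(-e^w)` is holomorphic on the strip `|Im w| < π`,
with derivative `-Log(1 + e^w)`. -/
theorem stmt_2 :
    DifferentiableOn ℂ (fun w : ℂ => Li2 (-Complex.exp w)) {w : ℂ | |w.im| < π} ∧
    ∀ w : ℂ, |w.im| < π →
      HasDerivAt (fun w : ℂ => Li2 (-Complex.exp w))
        (-Complex.log (1 + Complex.exp w)) w := by
  have hderiv : ∀ w : ℂ, |w.im| < π →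
      HasDerivAt (fun w : ℂ => Li2 (-exp w)) (-log (1 + exp w)) w := by
    intro w hw
    have hslit := one_add_mem_slitPlane (exp_mem_slitPlane_of_abs_im_lt hw)
    refine ((hasDerivAt_Li2 (z := -exp w) (by rwa [sub_neg_eq_add])).comp w
      (hasDerivAt_exp w).neg).congr_deriv ?_
    rw [log_eq_integral hslit]
    simp [real_smul, mul_comm]
  exact ⟨fun w hw => (hderiv w hw).differentiableAt.differentiableWithinAt, hderiv⟩
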